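/- For Laplacian matrices L and L_s of connected graphs satisfying (1-ε)L ⪯ L_s ⪯ (1+ε)L with ε ∈ (0,1), the quantity tr(L_s^†) + tr(L^†) − 4·tr((L+L_s)^†) is bounded above by [ε(4-ε)/((1-ε)(2+ε))] · tr(L^†). -/

import Mathlib

open Matrix

/-- `B` is the Moore–Penrose pseudoinverse of `A`. -/
def IsMPInv {n : ℕ} (A B : Matrix (Fin n) (Fin n) ℝ) : Prop :=
  A * B * A = A ∧ B * A * B = B ∧ (A * B)ᵀ = A * B ∧ (B * A)ᵀ = B * A

/-!
The Loewner sandwich `(1 - ε) L ⪯ Lₛ ⪯ (1 + ε) L` forces `ker Lₛ = ker L = ker (L + Lₛ)`, and on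
positive semidefinite matrices with a common kernel the pseudoinverse is antitone: if `A ⪯ B`,
then `A A† = B B†`, and for `x = B† w`, `y = A† w` expanding `0 ≤ (x - y)ᵀ A (x - y)` with
`xᵀ A x ≤ xᵀ B x` gives `wᵀ B† w ≤ wᵀ A† w`. Applied to `(1 - ε) L ⪯ Lₛ` and
`L + Lₛ ⪯ (2 + ε) L` this yields `tr Lₛ† ≤ tr L† / (1 - ε)` and `tr (L + Lₛ)† ≥ tr L† / (2 + ε)`,
and `1 / (1 - ε) + 1 - 4 / (2 + ε) = ε (4 - ε) / ((1 - ε) (2 + ε))`.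
-/

theorem Matrix.IsSymm.mulVec_dotProduct {m : Type*} [Fintype m] {M : Matrix m m ℝ}
    (hM : M.IsSymm) (u v : m → ℝ) : (M *ᵥ u) ⬝ᵥ v = u ⬝ᵥ (M *ᵥ v) := by
  rw [dotProduct_mulVec, ← mulVec_transpose, hM.eq]

theorem Matrix.PosSemidef.isSymm {m : Type*} {M : Matrix m m ℝ} (hM : M.PosSemidef) :
    M.IsSymm :=
  isHermitian_iff_isSymm.mp hM.1

theorem Matrix.PosSemidef.mulVec_eq_zero_of_sub {m : Type*} [Fintype m]
    {A B : Matrix m m ℝ} (hA : A.PosSemidef) (hBA : (B - A).PosSemidef) {v : m → ℝ}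
    (hv : B *ᵥ v = 0) : A *ᵥ v = 0 := by
  refine (hA.dotProduct_mulVec_zero_iff v).mp (le_antisymm ?_ (hA.dotProduct_mulVec_nonneg v))
  have := hBA.dotProduct_mulVec_nonneg v
  rw [sub_mulVec, dotProduct_sub, hv, dotProduct_zero] at this
  linarith

namespace IsMPInv

variable {n : ℕ} {A B X Y : Matrix (Fin n) (Fin n) ℝ}

theorem unique (hX : IsMPInv A X) (hY : IsMPInv A Y) : X = Y := by
  obtain ⟨x1, x2, x3, x4⟩ := hX
  obtain ⟨y1, y2, y3, y4⟩ := hY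
  have hAX : A * X = A * Y :=
    calc A * X = (A * Y) * (A * X) := by rw [← Matrix.mul_assoc (A * Y) A X, y1]
    _ = (A * Y)ᵀ * (A * X)ᵀ := by rw [x3, y3]
    _ = ((A * X) * (A * Y))ᵀ := (transpose_mul _ _).symm
    _ = A * Y := by rw [← Matrix.mul_assoc (A * X) A Y, x1, y3]
  have hXA : X * A = Y * A :=
    calc X * A = (X * A) * (Y * A) := by rw [Matrix.mul_assoc X A, ← Matrix.mul_assoc A Y A, y1]
    _ = (X * A)ᵀ * (Y * A)ᵀ := by rw [x4, y4]
    _ = ((Y * A) * (X * A))ᵀ := (transpose_mul _ _).symm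
    _ = Y * A := by rw [Matrix.mul_assoc Y A, ← Matrix.mul_assoc A X A, x1, y4]
  calc X = X * A * X := x2.symm
  _ = Y * (A * Y) := by rw [hXA, Matrix.mul_assoc, hAX]
  _ = Y := by rw [← Matrix.mul_assoc, y2]

theorem transpose (hX : IsMPInv A X) : IsMPInv Aᵀ Xᵀ := by
  obtain ⟨h1, h2, h3, h4⟩ := hX
  refine ⟨?_, ?_, ?_, ?_⟩ <;>
    simp only [← transpose_mul, transpose_transpose, Matrix.mul_assoc] at * <;>
    simp only [h1, h2, h3, h4]

theorem isSymm (hA : A.IsSymm) (hX : IsMPInv A X) : X.IsSymm :=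
  (hA.eq ▸ hX.transpose).unique hX

theorem smul {c : ℝ} (hc : c ≠ 0) (hX : IsMPInv A X) : IsMPInv (c • A) (c⁻¹ • X) := by
  obtain ⟨h1, h2, h3, h4⟩ := hX
  refine ⟨?_, ?_, ?_, ?_⟩ <;>
    simp only [Matrix.smul_mul, Matrix.mul_smul, smul_smul, transpose_smul, h1, h2, h3, h4,
      mul_inv_cancel_left₀ hc, inv_mul_cancel_left₀ hc]

theorem mul_comm (hA : A.IsSymm) (hX : IsMPInv A X) : A * X = X * A := by
  rw [← hX.2.2.1, transpose_mul, (hX.isSymm hA).eq, hA.eq]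

theorem mul_mul_self (hX : IsMPInv A X) : A * X * (A * X) = A * X := by
  rw [← Matrix.mul_assoc, hX.1]

theorem mul_mulVec_eq_zero_iff (hA : A.IsSymm) (hX : IsMPInv A X) {v : Fin n → ℝ} :
    (A * X) *ᵥ v = 0 ↔ A *ᵥ v = 0 := by
  constructor
  · intro hv
    rw [← hX.1, Matrix.mul_assoc, ← hX.mul_comm hA, ← mulVec_mulVec, hv, mulVec_zero]
  · intro hv
    rw [hX.mul_comm hA, ← mulVec_mulVec, hv, mulVec_zero]

theorem mul_mul_eq_of_ker_le (hA : A.IsSymm) (hB : B.IsSymm) (hX : IsMPInv A X)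
    (hY : IsMPInv B Y) (hker : ∀ v, B *ᵥ v = 0 → A *ᵥ v = 0) :
    A * X * (B * Y) = A * X := by
  refine ext_iff_mulVec.mpr fun v => ?_
  -- `v - B Y v` lies in `ker B ⊆ ker A = ker (A X)`
  have hQ : (B * Y) *ᵥ (v - (B * Y) *ᵥ v) = 0 := by
    rw [mulVec_sub, mulVec_mulVec, hY.mul_mul_self, sub_self]
  have hP := (hX.mul_mulVec_eq_zero_iff hA).mpr (hker _ ((hY.mul_mulVec_eq_zero_iff hB).mp hQ))
  rw [mulVec_sub, sub_eq_zero, mulVec_mulVec] at hP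
  exact hP.symm

theorem mul_eq_mul_of_ker_eq (hA : A.IsSymm) (hB : B.IsSymm) (hX : IsMPInv A X)
    (hY : IsMPInv B Y) (hker : ∀ v, A *ᵥ v = 0 ↔ B *ᵥ v = 0) :
    A * X = B * Y :=
  calc A * X = A * X * (B * Y) := (mul_mul_eq_of_ker_le hA hB hX hY fun v => (hker v).mpr).symm
  _ = (B * Y * (A * X))ᵀ := by rw [transpose_mul, hX.2.2.1, hY.2.2.1]
  _ = B * Y := by rw [mul_mul_eq_of_ker_le hB hA hY hX fun v => (hker v).mp, hY.2.2.1]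

theorem posSemidef_sub_of_posSemidef_sub (hA : A.PosSemidef) (hBA : (B - A).PosSemidef)
    (hker : ∀ v, A *ᵥ v = 0 → B *ᵥ v = 0) (hX : IsMPInv A X) (hY : IsMPInv B Y) :
    (X - Y).PosSemidef := by
  have hB : B.PosSemidef := by simpa using hA.add hBA
  have hXs := hX.isSymm hA.isSymm
  have hYs := hY.isSymm hB.isSymm
  have hP : A * X = B * Y := mul_eq_mul_of_ker_eq hA.isSymm hB.isSymm hX hY
    fun v => ⟨hker v, hA.mulVec_eq_zero_of_sub hBA⟩
  refine .of_dotProduct_mulVec_nonneg (isHermitian_iff_isSymm.mpr (hXs.sub hYs)) fun w => ?_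
  rw [star_trivial, sub_mulVec, dotProduct_sub, sub_nonneg]
  set x := Y *ᵥ w
  set y := X *ᵥ w
  have hxAy : x ⬝ᵥ (A *ᵥ y) = w ⬝ᵥ x := by
    rw [mulVec_mulVec, hP, hYs.mulVec_dotProduct, mulVec_mulVec, ← Matrix.mul_assoc, hY.2.1]
  have hyAy : y ⬝ᵥ (A *ᵥ y) = w ⬝ᵥ y := by
    rw [hXs.mulVec_dotProduct, mulVec_mulVec, mulVec_mulVec, hX.2.1]
  have hxBx : x ⬝ᵥ (B *ᵥ x) = w ⬝ᵥ x := by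
    rw [hYs.mulVec_dotProduct, mulVec_mulVec, mulVec_mulVec, hY.2.1]
  have hyAx : y ⬝ᵥ (A *ᵥ x) = x ⬝ᵥ (A *ᵥ y) := by
    rw [dotProduct_comm, hA.isSymm.mulVec_dotProduct]
  have hAB : x ⬝ᵥ (A *ᵥ x) ≤ x ⬝ᵥ (B *ᵥ x) := by
    have := hBA.dotProduct_mulVec_nonneg x
    rwa [star_trivial, sub_mulVec, dotProduct_sub, sub_nonneg] at this
  have hxy := hA.dotProduct_mulVec_nonneg (x - y)
  rw [star_trivial, mulVec_sub, dotProduct_sub, sub_dotProduct, sub_dotProduct] at hxy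
  linarith

theorem trace_le_trace (hA : A.PosSemidef) (hBA : (B - A).PosSemidef)
    (hker : ∀ v, A *ᵥ v = 0 → B *ᵥ v = 0) (hX : IsMPInv A X) (hY : IsMPInv B Y) :
    Y.trace ≤ X.trace :=
  sub_nonneg.mp (trace_sub X Y ▸ (posSemidef_sub_of_posSemidef_sub hA hBA hker hX hY).trace_nonneg)

end IsMPInv

theorem trace_error_bound_general {n : ℕ}
    (L Ls : Matrix (Fin n) (Fin n) ℝ)
    (hLpsd : L.PosSemidef)
    (hspsd : Ls.PosSemidef)
    (ε : ℝ) (hε0 : 0 < ε) (hε1 : ε < 1)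
    (h1 : (Ls - (1 - ε) • L).PosSemidef)
    (h2 : ((1 + ε) • L - Ls).PosSemidef)
    (Ld Lsd Sd : Matrix (Fin n) (Fin n) ℝ)
    (hLd : IsMPInv L Ld) (hLsd : IsMPInv Ls Lsd) (hSd : IsMPInv (L + Ls) Sd) :
    Lsd.trace + Ld.trace - 4 * Sd.trace ≤
      (ε * (4 - ε) / ((1 - ε) * (2 + ε))) * Ld.trace := by
  have hε1' : 1 - ε ≠ 0 := by linarith
  have hε2 : 2 + ε ≠ 0 := by linarith
  have hker_Ls : ∀ v, L *ᵥ v = 0 → Ls *ᵥ v = 0 := fun v hv =>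
    hspsd.mulVec_eq_zero_of_sub h2 (by rw [smul_mulVec, hv, smul_zero])
  have hker_L : ∀ v, (L + Ls) *ᵥ v = 0 → L *ᵥ v = 0 := fun v hv =>
    hLpsd.mulVec_eq_zero_of_sub (by rwa [add_sub_cancel_left]) hv
  have hLs : Lsd.trace ≤ (1 - ε)⁻¹ * Ld.trace := by
    have := (hLd.smul hε1').trace_le_trace (hLpsd.smul (by linarith)) h1
      (fun v hv => hker_Ls v (by rwa [smul_mulVec, smul_eq_zero_iff_right hε1'] at hv)) hLsd
    rwa [trace_smul, smul_eq_mul] at this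
  have hS : (2 + ε)⁻¹ * Ld.trace ≤ Sd.trace := by
    have := hSd.trace_le_trace (hLpsd.add hspsd) (by convert h2 using 1; module)
      (fun v hv => by rw [smul_mulVec, hker_L v hv, smul_zero]) (hLd.smul hε2)
    rwa [trace_smul, smul_eq_mul] at this
  have hcoeff : (1 - ε)⁻¹ + 1 - 4 * (2 + ε)⁻¹ = ε * (4 - ε) / ((1 - ε) * (2 + ε)) := by
    field_simp
    ring
  rw [← hcoeff]
  linarith

/-- If `(1-ε)L ⪯ L_s ⪯ (1+ε)L` with `ε ∈ (0,1)` for Laplacians of connected graphs,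
then `tr(L_s†) + tr(L†) - 4 tr((L+L_s)†) ≤ [ε(4-ε)/((1-ε)(2+ε))] tr(L†)`. -/
theorem trace_error_bound {n : ℕ}
    (L Ls : Matrix (Fin n) (Fin n) ℝ)
    (hLsym : L.IsSymm) (hLpsd : L.PosSemidef)
    (hLone : L.mulVec (fun _ => 1) = 0)
    (hLker : ∀ x, L.mulVec x = 0 → ∃ c : ℝ, x = fun _ => c)
    (hssym : Ls.IsSymm) (hspsd : Ls.PosSemidef)
    (hsone : Ls.mulVec (fun _ => 1) = 0)
    (hsker : ∀ x, Ls.mulVec x = 0 → ∃ c : ℝ, x = fun _ => c)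
    (ε : ℝ) (hε0 : 0 < ε) (hε1 : ε < 1)
    (h1 : (Ls - (1 - ε) • L).PosSemidef)
    (h2 : ((1 + ε) • L - Ls).PosSemidef)
    (Ld Lsd Sd : Matrix (Fin n) (Fin n) ℝ)
    (hLd : IsMPInv L Ld) (hLsd : IsMPInv Ls Lsd) (hSd : IsMPInv (L + Ls) Sd) :
    Lsd.trace + Ld.trace - 4 * Sd.trace ≤
      (ε * (4 - ε) / ((1 - ε) * (2 + ε))) * Ld.trace :=
  trace_error_bound_general L Ls hLpsd hspsd ε hε0 hε1 h1 h2 Ld Lsd Sd hLd hLsd hSd
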